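/- Consider the optimization problem minimizing f(p) = -Σ_j p_j + Σ_i B_i log( max{⟨p,x⟩ : x ≥ 0, d_i(x) ≤ 1} ) over p ≥ 0 subject to Σ_j p_j = Σ_i B_i, where d_i are CCH and strictly increasing in each coordinate. If (p̃, μ̃, α̃) satisfies the KKT conditions (α̃ - μ̃·1_m ∈ ∂f(p̃) = Z(p̃), α̃ ≥ 0, p̃_j α̃_j = 0, Σ_j p̃_j = Σ_i B_i, p̃ ≥ 0), then μ̃ = 0, α̃ = 0, p̃ > 0, and p̃ is an equilibrium price vector (0 ∈ Z(p̃)). Conversely every equilibrium price is a KKT point with α* = 0, μ* = 0. -/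

import Mathlib

open Finset

/-- Agent demand: disutility-minimizing bundles subject to earning at least `Bi`. -/
def demandSet (m : ℕ) (d : (Fin m → ℝ) → ℝ) (Bi : ℝ) (p : Fin m → ℝ) :
    Set (Fin m → ℝ) :=
  {x | (∀ j, 0 ≤ x j) ∧ Bi ≤ ∑ j, p j * x j ∧
    ∀ y : Fin m → ℝ, (∀ j, 0 ≤ y j) → Bi ≤ ∑ j, p j * y j → d x ≤ d y}

/-- Excess demand correspondence `Z(p) = { Σ_i x_i - 1_m : x_i ∈ X_i(p) }`. -/
def excessDemand (n m : ℕ) (d : Fin n → (Fin m → ℝ) → ℝ) (B : Fin n → ℝ)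
    (p : Fin m → ℝ) : Set (Fin m → ℝ) :=
  {z | ∃ x : Fin n → Fin m → ℝ, (∀ i, x i ∈ demandSet m (d i) (B i) p) ∧
    z = fun j => (∑ i, x i j) - 1}

/-- Relative excess demand `Z̃(p) = { z - (1/m)(Σ_j z_j)·1_m : z ∈ Z(p) }`. -/
def relExcessDemand (n m : ℕ) (d : Fin n → (Fin m → ℝ) → ℝ) (B : Fin n → ℝ)
    (p : Fin m → ℝ) : Set (Fin m → ℝ) :=
  {zt | ∃ z ∈ excessDemand n m d B p, zt = fun j => z j - (∑ j', z j') / m}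

/-!
Strict monotonicity of the disutilities forces every optimal bundle to spend exactly its
budget (otherwise shrink it) and to buy nothing of a free good (otherwise drop that good).
The first fact is Walras' law `⟨p, z⟩ = Σ_i B_i - Σ_j p_j = 0` on `Z(p)`; applied to
`z = α - μ·1` together with `p_j α_j = 0` it gives `μ Σ_i B_i = 0`, so `μ = 0`. The second
fact gives `z_j = -1` at a zero price, impossible for `z_j = α_j ≥ 0`; hence `p > 0`, and
complementary slackness leaves `α = 0`.
-/

open Set

section Demand

variable {m : ℕ} {d : (Fin m → ℝ) → ℝ} {Bi : ℝ} {p x : Fin m → ℝ}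

theorem sum_mul_eq_of_mem_demandSet (hd : StrictMonoOn d (Ici 0)) (hBi : 0 ≤ Bi)
    (hx : x ∈ demandSet m d Bi p) : ∑ j, p j * x j = Bi := by
  obtain ⟨hx_nonneg, hbudget, hopt⟩ := hx
  set S := ∑ j, p j * x j
  by_contra hne
  have hlt : Bi < S := lt_of_le_of_ne hbudget (Ne.symm hne)
  have hS : 0 < S := hBi.trans_lt hlt
  have hx_ne : x ≠ 0 := by
    rintro rfl
    simp [S] at hS
  set c := Bi / S
  have hc0 : 0 ≤ c := div_nonneg hBi hS.le
  have hc1 : c < 1 := (div_lt_one hS).mpr hlt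
  have hcx_nonneg : 0 ≤ c • x := smul_nonneg hc0 hx_nonneg
  have hcx_lt : c • x < x := by
    refine lt_of_le_of_ne (fun j => ?_) fun h => hx_ne ?_
    · simpa using mul_le_of_le_one_left (hx_nonneg j) hc1.le
    · have : (1 - c) • x = 0 := by rw [sub_smul, one_smul, h, sub_self]
      exact (smul_eq_zero.mp this).resolve_left (sub_ne_zero.mpr hc1.ne')
  have hcx_budget : Bi ≤ ∑ j, p j * (c • x) j := by
    have : ∑ j, p j * (c • x) j = c * S := by
      simp only [Pi.smul_apply, smul_eq_mul, S, mul_sum]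
      exact sum_congr rfl fun j _ => by ring
    rw [this, div_mul_cancel₀ _ hS.ne']
  exact (hd hcx_nonneg hx_nonneg hcx_lt).not_ge (hopt _ hcx_nonneg hcx_budget)

theorem apply_eq_zero_of_mem_demandSet (hd : StrictMonoOn d (Ici 0))
    (hx : x ∈ demandSet m d Bi p) {j : Fin m} (hpj : p j = 0) : x j = 0 := by
  obtain ⟨hx_nonneg, hbudget, hopt⟩ := hx
  by_contra hne
  set y := Function.update x j 0
  have hy_nonneg : 0 ≤ y := by
    intro k
    rcases eq_or_ne k j with rfl | hk
    · simp [y]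
    · simpa [y, hk] using hx_nonneg k
  have hy_lt : y < x := by
    refine lt_of_le_of_ne (fun k => ?_) fun h => hne ?_
    · rcases eq_or_ne k j with rfl | hk
      · simpa [y] using hx_nonneg k
      · simp [y, hk]
    · simpa [y] using (congrFun h j).symm
  have hy_budget : Bi ≤ ∑ k, p k * y k := by
    refine hbudget.trans_eq (sum_congr rfl fun k _ => ?_)
    rcases eq_or_ne k j with rfl | hk
    · simp [y, hpj]
    · simp [y, hk]
  exact (hd hy_nonneg hx_nonneg hy_lt).not_ge (hopt y hy_nonneg hy_budget)

end Demand

section ExcessDemand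

variable {n m : ℕ} {d : Fin n → (Fin m → ℝ) → ℝ} {B : Fin n → ℝ} {p z : Fin m → ℝ}

theorem sum_mul_eq_zero_of_mem_excessDemand (hd : ∀ i, StrictMonoOn (d i) (Ici 0))
    (hB : ∀ i, 0 ≤ B i) (hp : ∑ j, p j = ∑ i, B i) (hz : z ∈ excessDemand n m d B p) :
    ∑ j, p j * z j = 0 := by
  obtain ⟨x, hx, rfl⟩ := hz
  calc ∑ j, p j * ((∑ i, x i j) - 1)
      = ∑ i, ∑ j, p j * x i j - ∑ j, p j := by
        simp only [mul_sub, mul_one, sum_sub_distrib, mul_sum]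
        rw [sum_comm]
    _ = 0 := by
        rw [sum_congr rfl fun i _ => sum_mul_eq_of_mem_demandSet (hd i) (hB i) (hx i), hp,
          sub_self]

theorem apply_eq_neg_one_of_mem_excessDemand (hd : ∀ i, StrictMonoOn (d i) (Ici 0))
    (hz : z ∈ excessDemand n m d B p) {j : Fin m} (hpj : p j = 0) : z j = -1 := by
  obtain ⟨x, hx, rfl⟩ := hz
  simp [apply_eq_zero_of_mem_demandSet (hd _) (hx _) hpj]

end ExcessDemand

theorem general_eg_dual_kkt_iff_CE_general
    (n m : ℕ) (hn : 0 < n)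
    (B : Fin n → ℝ) (hB : ∀ i, 0 < B i)
    (d : Fin n → (Fin m → ℝ) → ℝ)
    (hmono : ∀ i (x y : Fin m → ℝ), (∀ j, 0 ≤ x j) → (∀ j, x j ≤ y j) → x ≠ y →
      d i x < d i y) :
    (∀ (pt : Fin m → ℝ) (μ : ℝ) (α : Fin m → ℝ),
      (∀ j, 0 ≤ α j) → (∀ j, pt j * α j = 0) →
      (∀ j, 0 ≤ pt j) → (∑ j, pt j) = (∑ i, B i) →
      (fun j => α j - μ) ∈ excessDemand n m d B pt →
      μ = 0 ∧ α = 0 ∧ (∀ j, 0 < pt j) ∧ (0 : Fin m → ℝ) ∈ excessDemand n m d B pt) ∧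
    (∀ pt : Fin m → ℝ,
      (∀ j, 0 ≤ pt j) → (∑ j, pt j) = (∑ i, B i) →
      (0 : Fin m → ℝ) ∈ excessDemand n m d B pt →
      ∃ (μ : ℝ) (α : Fin m → ℝ), μ = 0 ∧ α = 0 ∧
        (∀ j, 0 ≤ α j) ∧ (∀ j, pt j * α j = 0) ∧
        (fun j => α j - μ) ∈ excessDemand n m d B pt) := by
  have hd : ∀ i, StrictMonoOn (d i) (Ici 0) := fun i x hx _ _ hxy =>
    hmono i x _ hx hxy.le hxy.ne
  refine ⟨fun pt μ α hα hcs hpt hsum hz => ?_, fun pt _ _ h0 => ⟨0, 0, rfl, rfl,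
    fun _ => le_rfl, fun _ => mul_zero _, by convert h0; simp⟩⟩
  have hSB : 0 < ∑ i, B i := sum_pos (fun i _ => hB i) (univ_nonempty_iff.mpr ⟨⟨0, hn⟩⟩)
  have hμ : μ = 0 := by
    have hwalras := sum_mul_eq_zero_of_mem_excessDemand hd (fun i => (hB i).le) hsum hz
    have hμB : (∑ i, B i) * μ = 0 := by
      rw [← hsum, sum_mul]
      simpa only [mul_sub, sum_sub_distrib, hcs, sum_const_zero, zero_sub, neg_eq_zero,
        sum_neg_distrib] using hwalras
    exact (mul_eq_zero.mp hμB).resolve_left hSB.ne'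
  subst hμ
  have hpos : ∀ j, 0 < pt j := fun j => (hpt j).lt_of_ne fun h => by
    linarith [hα j, apply_eq_neg_one_of_mem_excessDemand hd hz h.symm]
  have hα0 : α = 0 := funext fun j => (mul_eq_zero.mp (hcs j)).resolve_left (hpos j).ne'
  subst hα0
  exact ⟨rfl, rfl, hpos, by convert hz; simp⟩

/-- For the General EG Dual program (minimize
`f(p) = -Σ_j p_j + Σ_i B_i log(max{⟨p,x⟩ : x ≥ 0, d_i(x) ≤ 1})` over `p ≥ 0` with
`Σ_j p_j = Σ_i B_i`), whose Clarke subdifferential equals the excess demand `Z(p)`: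
if `(p̃, μ̃, α̃)` satisfies the KKT conditions (`α̃ - μ̃·1_m ∈ Z(p̃)`, `α̃ ≥ 0`,
`p̃_j α̃_j = 0`, `Σ_j p̃_j = Σ_i B_i`, `p̃ ≥ 0`), then `μ̃ = 0`, `α̃ = 0`, `p̃ > 0`, and
`p̃` is an equilibrium price (`0 ∈ Z(p̃)`).  Conversely, every equilibrium price is a
KKT point with `α* = 0`, `μ* = 0`. -/
theorem general_eg_dual_kkt_iff_CE
    (n m : ℕ) (hn : 0 < n) (hm : 0 < m)
    (B : Fin n → ℝ) (hB : ∀ i, 0 < B i)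
    (d : Fin n → (Fin m → ℝ) → ℝ)
    (hcont : ∀ i, Continuous (d i))
    (hconv : ∀ i, ConvexOn ℝ {x : Fin m → ℝ | ∀ j, 0 ≤ x j} (d i))
    (hhom : ∀ i (c : ℝ), 0 < c → ∀ x : Fin m → ℝ, d i (c • x) = c * d i x)
    (hmono : ∀ i (x y : Fin m → ℝ), (∀ j, 0 ≤ x j) → (∀ j, x j ≤ y j) → x ≠ y →
      d i x < d i y) :
    (∀ (pt : Fin m → ℝ) (μ : ℝ) (α : Fin m → ℝ),
      (∀ j, 0 ≤ α j) → (∀ j, pt j * α j = 0) →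
      (∀ j, 0 ≤ pt j) → (∑ j, pt j) = (∑ i, B i) →
      (fun j => α j - μ) ∈ excessDemand n m d B pt →
      μ = 0 ∧ α = 0 ∧ (∀ j, 0 < pt j) ∧ (0 : Fin m → ℝ) ∈ excessDemand n m d B pt) ∧
    (∀ pt : Fin m → ℝ,
      (∀ j, 0 ≤ pt j) → (∑ j, pt j) = (∑ i, B i) →
      (0 : Fin m → ℝ) ∈ excessDemand n m d B pt →
      ∃ (μ : ℝ) (α : Fin m → ℝ), μ = 0 ∧ α = 0 ∧
        (∀ j, 0 ≤ α j) ∧ (∀ j, pt j * α j = 0) ∧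
        (fun j => α j - μ) ∈ excessDemand n m d B pt) :=
  general_eg_dual_kkt_iff_CE_general n m hn B hB d hmono
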